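/- arXiv:2010.10383 — 4 statements merged into one kernel-verified Lean document; each statement's English description precedes it below -/
import Mathlib

section
/- Let ψ₁, …, ψ_m ∈ H be b-orthonormal eigenfunctions with nonzero eigenvalues E₁, …, E_m, and let ψ ∈ H satisfy b ψ ψ = 1 and b ψ ψᵢ = 0 for all i. Define A : H → ℝ^{m+1} by A φ = (b ψ φ, b ψ₁ φ, …, b ψ_m φ), and let B : ℝ^{m+1} → ℝ^{m+1} be a two-sided inverse of A ∘ A†. Then the projected gradient of the energy at ψ simplifies to (id_H − A† ∘ B ∘ A)(ψ) = ψ − (1 / (b (G ψ) ψ)) • (G ψ). (Consequently the projected Sobolev gradient flow takes the simplified form ψ̇(t) = −ψ(t) + (b (G ψ(t)) ψ(t))⁻¹ • G ψ(t).) -/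
open RealInnerProductSpace

/-- At a constrained point `ψ`, the projected gradient of the energy simplifies
to `ψ - (1 / b (G ψ) ψ) • G ψ`. -/
theorem projected_gradient_simplified
    {H : Type*} [NormedAddCommGroup H] [InnerProductSpace ℝ H] [CompleteSpace H]
    (b : H →L[ℝ] H →L[ℝ] ℝ) (hb : ∀ x y : H, b x y = b y x)
    (G : H →L[ℝ] H) (hG : ∀ ψ φ : H, ⟪G ψ, φ⟫ = b ψ φ)
    (m : ℕ) (ψs : Fin m → H) (E : Fin m → ℝ) (hE : ∀ i, E i ≠ 0)
    (heig : ∀ (i : Fin m) (φ : H), ⟪ψs i, φ⟫ = E i * b (ψs i) φ)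
    (horth : ∀ i j : Fin m, b (ψs i) (ψs j) = if i = j then 1 else 0)
    (ψ : H) (hψ : b ψ ψ = 1) (hperp : ∀ i : Fin m, b ψ (ψs i) = 0)
    (A : H →L[ℝ] EuclideanSpace ℝ (Fin (m + 1)))
    (hA : A = (EuclideanSpace.equiv (Fin (m + 1)) ℝ).symm.toContinuousLinearMap ∘L
        ContinuousLinearMap.pi (Fin.cons (b ψ) (fun j : Fin m => b (ψs j))))
    (B : EuclideanSpace ℝ (Fin (m + 1)) →L[ℝ] EuclideanSpace ℝ (Fin (m + 1)))
    (hB₁ : (A ∘L ContinuousLinearMap.adjoint A) ∘L B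
        = ContinuousLinearMap.id ℝ (EuclideanSpace ℝ (Fin (m + 1))))
    (hB₂ : B ∘L (A ∘L ContinuousLinearMap.adjoint A)
        = ContinuousLinearMap.id ℝ (EuclideanSpace ℝ (Fin (m + 1)))) :
    (ContinuousLinearMap.id ℝ H - ContinuousLinearMap.adjoint A ∘L B ∘L A) ψ
      = ψ - (1 / b (G ψ) ψ) • G ψ := by

  classical
  set e0 : EuclideanSpace ℝ (Fin (m+1)) := EuclideanSpace.single 0 1 with he0
  have hc : b (G ψ) ψ = ⟪G ψ, G ψ⟫ := by rw [hb]; exact (hG ψ (G ψ)).symm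
  have hGψne : G ψ ≠ 0 := by
    intro h
    have h1 := hG ψ ψ
    rw [h, inner_zero_left, hψ] at h1
    norm_num at h1
  have hc0 : b (G ψ) ψ ≠ 0 := by
    rw [hc]
    simpa using (inner_self_ne_zero (𝕜 := ℝ)).mpr hGψne
  have hAψ : A ψ = e0 := by
    rw [hA]
    ext k
    refine Fin.cases ?_ (fun j => ?_) k <;>
      simp [he0, EuclideanSpace.single_apply, hψ, hb _ ψ, hperp, Fin.succ_ne_zero]
  have hAdj : ContinuousLinearMap.adjoint A e0 = G ψ := by
    apply ext_inner_right ℝ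
    intro v
    rw [ContinuousLinearMap.adjoint_inner_left, hG]
    rw [he0, EuclideanSpace.inner_single_left, hA]
    simp
  have hGψs : ∀ j, G (ψs j) = (E j)⁻¹ • ψs j := by
    intro j
    apply ext_inner_right ℝ
    intro v
    rw [hG, real_inner_smul_left, heig, ← mul_assoc, inv_mul_cancel₀ (hE j), one_mul]
  have hbort : ∀ j, b (ψs j) (G ψ) = 0 := by
    intro j
    rw [← hG, hGψs, real_inner_smul_left, real_inner_comm, hG, hperp, mul_zero]
  have hAGψ : A (G ψ) = (b (G ψ) ψ) • e0 := by
    rw [hA]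
    ext k
    refine Fin.cases ?_ (fun j => ?_) k <;>
      simp [he0, EuclideanSpace.single_apply, hb ψ (G ψ), hbort, Fin.succ_ne_zero]
  have key : B e0 = (b (G ψ) ψ)⁻¹ • e0 := by
    have h1 : (A ∘L ContinuousLinearMap.adjoint A) ((b (G ψ) ψ)⁻¹ • e0) = e0 := by
      rw [map_smul]
      simp only [ContinuousLinearMap.comp_apply, hAdj, hAGψ]
      rw [smul_smul, inv_mul_cancel₀ hc0, one_smul]
    calc B e0 = (B ∘L (A ∘L ContinuousLinearMap.adjoint A)) ((b (G ψ) ψ)⁻¹ • e0) := by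
          rw [ContinuousLinearMap.comp_apply, h1]
      _ = (b (G ψ) ψ)⁻¹ • e0 := by rw [hB₂]; rfl
  simp only [ContinuousLinearMap.sub_apply, ContinuousLinearMap.id_apply,
    ContinuousLinearMap.comp_apply, hAψ, key, map_smul, hAdj, one_div]
end

section
/- Let ψᵢ ∈ H be an eigenfunction with eigenvalue Eᵢ ≠ 0, i.e. ⟨ψᵢ, φ⟩ = Eᵢ · b ψᵢ φ for all φ ∈ H. Then for any ψ ∈ H and any real numbers τ, γ, the gradient-flow update satisfies the exact identity b ((1 − τ) • ψ + (τ·γ) • (G ψ)) ψᵢ = (1 − τ·(1 − γ/Eᵢ)) · b ψ ψᵢ. In particular, if b ψ ψᵢ = 0 then b ((1 − τ) • ψ + (τ·γ) • (G ψ)) ψᵢ = 0. -/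
open RealInnerProductSpace

/-- Exact identity for the gradient-flow update against an eigenfunction:
`b ((1-τ)•ψ + (τγ)•Gψ) ψᵢ = (1 - τ(1 - γ/Eᵢ)) * b ψ ψᵢ`; in particular the
update preserves `b`-orthogonality to `ψᵢ`. -/
theorem gradient_flow_update_identity
    {H : Type*} [NormedAddCommGroup H] [InnerProductSpace ℝ H]
    (b : H →L[ℝ] H →L[ℝ] ℝ) (hb : ∀ x y : H, b x y = b y x)
    (G : H →L[ℝ] H) (hG : ∀ ψ φ : H, ⟪G ψ, φ⟫ = b ψ φ)
    (ψi : H) (Ei : ℝ) (hEi : Ei ≠ 0)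
    (heig : ∀ φ : H, ⟪ψi, φ⟫ = Ei * b ψi φ)
    (ψ : H) (τ γ : ℝ) :
    b ((1 - τ) • ψ + (τ * γ) • G ψ) ψi = (1 - τ * (1 - γ / Ei)) * b ψ ψi ∧
    (b ψ ψi = 0 → b ((1 - τ) • ψ + (τ * γ) • G ψ) ψi = 0) := by
  have key : b (G ψ) ψi = b ψ ψi / Ei := by
    have h1 : b ψ ψi = Ei * b ψi (G ψ) := by
      rw [← heig (G ψ), real_inner_comm, hG]
    rw [hb (G ψ) ψi, h1]
    field_simp
  have hmain : b ((1 - τ) • ψ + (τ * γ) • G ψ) ψi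
      = (1 - τ * (1 - γ / Ei)) * b ψ ψi := by
    simp only [map_add, map_smul, ContinuousLinearMap.add_apply,
      ContinuousLinearMap.smul_apply, smul_eq_mul, key]
    field_simp
    ring
  exact ⟨hmain, fun h => by rw [hmain, h, mul_zero]⟩
end

section
/- Let ψ₁, …, ψ_m ∈ H be eigenfunctions with nonzero eigenvalues E₁, …, E_m (⟨ψᵢ, φ⟩ = Eᵢ · b ψᵢ φ for all φ). Let (ψⁿ)_{n≥0} be a sequence in H generated by the gradient flow iteration: for each n there are real numbers τⁿ, γⁿ and cⁿ ≠ 0 such that ψⁿ⁺¹ = cⁿ • ((1 − τⁿ) • ψⁿ + (τⁿ·γⁿ) • (G ψⁿ)) (in the paper cⁿ is the b-normalizing constant and γⁿ = 1/(b (G ψⁿ) ψⁿ)). If b ψ⁰ ψᵢ = 0 for all i ∈ {1, …, m}, then b ψⁿ ψᵢ = 0 for all n ≥ 0 and all i ∈ {1, …, m}; that is, the gradient flow iteration preserves the orthogonality constraints. -/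
open RealInnerProductSpace

/-- The gradient flow iteration preserves the orthogonality constraints: if
`ψ⁰` is `b`-orthogonal to the eigenfunctions `ψ₁, …, ψ_m`, then so is every
iterate `ψⁿ`. -/
theorem gradient_flow_iteration_preserves_orthogonality
    {H : Type*} [NormedAddCommGroup H] [InnerProductSpace ℝ H]
    (b : H →L[ℝ] H →L[ℝ] ℝ) (hb : ∀ x y : H, b x y = b y x)
    (G : H →L[ℝ] H) (hG : ∀ ψ φ : H, ⟪G ψ, φ⟫ = b ψ φ)
    (m : ℕ) (ψs : Fin m → H) (E : Fin m → ℝ) (hE : ∀ i, E i ≠ 0)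
    (heig : ∀ (i : Fin m) (φ : H), ⟪ψs i, φ⟫ = E i * b (ψs i) φ)
    (ψ : ℕ → H)
    (hstep : ∀ n : ℕ, ∃ τ γ c : ℝ, c ≠ 0 ∧
      ψ (n + 1) = c • ((1 - τ) • ψ n + (τ * γ) • G (ψ n)))
    (h0 : ∀ i : Fin m, b (ψ 0) (ψs i) = 0) :
    ∀ (n : ℕ) (i : Fin m), b (ψ n) (ψs i) = 0 := by
  have key : ∀ (x : H) (i : Fin m), b x (ψs i) = 0 → b (G x) (ψs i) = 0 := by
    intro x i hx
    have h1 : E i * b (ψs i) (G x) = b x (ψs i) := by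
      rw [← heig i (G x), real_inner_comm, hG]
    rw [hb]
    have := hE i
    have hx' : E i * b (ψs i) (G x) = 0 := by rw [h1, hx]
    exact (mul_eq_zero.mp hx').resolve_left this
  intro n
  induction n with
  | zero => exact h0
  | succ n ih =>
    intro i
    obtain ⟨τ, γ, c, hc, hψ⟩ := hstep n
    rw [hψ]
    simp [ih i, key (ψ n) i (ih i)]
end

section
/- Assume in addition that G is compact, injective, and positive definite in the sense that b φ φ = ⟨G φ, φ⟩ > 0 for every φ ≠ 0. Let ψ⁰ ∈ H with b ψ⁰ ψ⁰ = 1. Then there exists τ_max > 0 such that for every choice of step sizes (τⁿ) with 0 < τⁿ ≤ τ_max for all n, the gradient flow iteration ψ̂ⁿ⁺¹ := (1 − τⁿ) • ψⁿ + (τⁿ·γⁿ) • (G ψⁿ), with γⁿ := 1/(b (G ψⁿ) ψⁿ), is well defined (ψ̂ⁿ⁺¹ ≠ 0), and with ψⁿ⁺¹ := (√(b ψ̂ⁿ⁺¹ ψ̂ⁿ⁺¹))⁻¹ • ψ̂ⁿ⁺¹ the energy is dissipative: 𝖤(ψⁿ⁺¹) ≤ 𝖤(ψⁿ) for all n ≥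 0, where 𝖤(u) := ½⟨u, u⟩. -/
/-!
Writing `b x y = ⟪G x, y⟫`, the operator `G` is positive and the constraint `b ψ ψ = 1` reads
`⟪G ψ, ψ⟫ = 1`. The unnormalized step `ψ̂` still satisfies `⟪G ψ̂, ψ⟫ = 1`, so positivity of `G`
on `ψ̂ - ψ` gives `⟪G ψ̂, ψ̂⟫ ≥ 1` and normalizing can only shrink `ψ̂`. Expanding,
`⟪ψ̂, ψ̂⟫ = ⟪ψ, ψ⟫ - τ (2 - τ) (⟪ψ, ψ⟫ - 1 / ‖G ψ‖²)`, and the last factor is nonnegative by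
Cauchy–Schwarz applied to `⟪G ψ, ψ⟫ = 1`; hence `τmax = 2` works.
-/

open RealInnerProductSpace

section

variable {H : Type*} [NormedAddCommGroup H] [InnerProductSpace ℝ H]

noncomputable def gradientFlowStep (G : H →L[ℝ] H) (τ : ℝ) (ψ : H) : H :=
  (1 - τ) • ψ + (τ * (1 / ⟪G (G ψ), ψ⟫)) • G ψ

noncomputable def normalizeBy (G : H →L[ℝ] H) (x : H) : H :=
  (Real.sqrt ⟪G x, x⟫)⁻¹ • x

namespace LinearMap.IsSymmetric

variable {G : H →L[ℝ] H} {ψ : H}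

lemma inner_map_map_self_pos (hG : (G : H →ₗ[ℝ] H).IsSymmetric) (hψ : ⟪G ψ, ψ⟫ = 1) :
    0 < ⟪G (G ψ), ψ⟫ := by
  rw [hG.apply_clm, real_inner_self_eq_norm_sq]
  have : G ψ ≠ 0 := by rintro h; simp [h] at hψ
  positivity

lemma inner_map_gradientFlowStep (hG : (G : H →ₗ[ℝ] H).IsSymmetric) (hψ : ⟪G ψ, ψ⟫ = 1)
    (τ : ℝ) : ⟪G (gradientFlowStep G τ ψ), ψ⟫ = 1 := by
  have hd := hG.inner_map_map_self_pos hψ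
  rw [hG.apply_clm] at hd
  rw [hG.apply_clm, gradientFlowStep, inner_add_left, real_inner_smul_left,
    real_inner_smul_left, ← hG.apply_clm, hψ, hG.apply_clm]
  field_simp
  ring

lemma inner_gradientFlowStep_self_le (hG : (G : H →ₗ[ℝ] H).IsSymmetric) (hψ : ⟪G ψ, ψ⟫ = 1)
    {τ : ℝ} (hτ₀ : 0 ≤ τ) (hτ₂ : τ ≤ 2) :
    ⟪gradientFlowStep G τ ψ, gradientFlowStep G τ ψ⟫ ≤ ⟪ψ, ψ⟫ := by
  have hd := hG.inner_map_map_self_pos hψ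
  rw [hG.apply_clm] at hd
  have hcs := real_inner_mul_inner_self_le (G ψ) ψ
  rw [hψ] at hcs
  have hγ : 1 / ⟪G ψ, G ψ⟫ ≤ ⟪ψ, ψ⟫ := by rw [div_le_iff₀ hd]; linarith
  have hψ' : ⟪ψ, G ψ⟫ = 1 := by rw [real_inner_comm, hψ]
  have : ⟪gradientFlowStep G τ ψ, gradientFlowStep G τ ψ⟫
      = ⟪ψ, ψ⟫ - τ * (2 - τ) * (⟪ψ, ψ⟫ - 1 / ⟪G ψ, G ψ⟫) := by
    simp only [gradientFlowStep, inner_add_add_self, real_inner_smul_left,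
      real_inner_smul_right, hG.apply_clm (G ψ) ψ, hψ, hψ']
    field_simp
    ring
  rw [this]
  nlinarith [mul_nonneg (mul_nonneg hτ₀ (sub_nonneg.2 hτ₂)) (sub_nonneg.2 hγ)]

end LinearMap.IsSymmetric

namespace ContinuousLinearMap.IsPositive

variable {G : H →L[ℝ] H}

lemma two_mul_inner_map_sub_le (hG : G.IsPositive) (x y : H) :
    2 * ⟪G x, y⟫ - ⟪G y, y⟫ ≤ ⟪G x, x⟫ := by
  have h := hG.inner_nonneg_left (x - y)
  simp only [map_sub, inner_sub_left, inner_sub_right, hG.isSymmetric.apply_clm y x,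
    real_inner_comm (G x) y] at h
  linarith

lemma one_le_inner_map_gradientFlowStep (hG : G.IsPositive) {ψ : H} (hψ : ⟪G ψ, ψ⟫ = 1)
    (τ : ℝ) : 1 ≤ ⟪G (gradientFlowStep G τ ψ), gradientFlowStep G τ ψ⟫ := by
  have := hG.two_mul_inner_map_sub_le (gradientFlowStep G τ ψ) ψ
  rw [hG.isSymmetric.inner_map_gradientFlowStep hψ, hψ] at this
  linarith

end ContinuousLinearMap.IsPositive

lemma inner_map_normalizeBy_self {G : H →L[ℝ] H} {x : H} (hx : 0 < ⟪G x, x⟫) :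
    ⟪G (normalizeBy G x), normalizeBy G x⟫ = 1 := by
  rw [normalizeBy, map_smul, real_inner_smul_left, real_inner_smul_right, ← mul_assoc,
    ← mul_inv, Real.mul_self_sqrt hx.le, inv_mul_cancel₀ hx.ne']

lemma inner_normalizeBy_self_le {G : H →L[ℝ] H} {x : H} (hx : 1 ≤ ⟪G x, x⟫) :
    ⟪normalizeBy G x, normalizeBy G x⟫ ≤ ⟪x, x⟫ := by
  rw [normalizeBy, real_inner_smul_left, real_inner_smul_right, ← mul_assoc,
    ← mul_inv, Real.mul_self_sqrt (by linarith)]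
  exact mul_le_of_le_one_left real_inner_self_nonneg (inv_le_one_of_one_le₀ hx)

end

theorem gradient_flow_energy_dissipation_general
    {H : Type*} [NormedAddCommGroup H] [InnerProductSpace ℝ H]
    (b : H →L[ℝ] H →L[ℝ] ℝ) (hb : ∀ x y : H, b x y = b y x)
    (G : H →L[ℝ] H) (hG : ∀ ψ φ : H, ⟪G ψ, φ⟫ = b ψ φ)
    (hpos : ∀ φ : H, φ ≠ 0 → 0 < b φ φ)
    (ψ0 : H) (hψ0 : b ψ0 ψ0 = 1) :
    ∃ τmax > (0 : ℝ), ∀ τ : ℕ → ℝ, (∀ n, 0 < τ n ∧ τ n ≤ τmax) →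
      ∀ ψ ψhat : ℕ → H, ψ 0 = ψ0 →
      (∀ n : ℕ, ψhat (n + 1)
          = (1 - τ n) • ψ n + (τ n * (1 / b (G (ψ n)) (ψ n))) • G (ψ n)) →
      (∀ n : ℕ, ψ (n + 1)
          = (Real.sqrt (b (ψhat (n + 1)) (ψhat (n + 1))))⁻¹ • ψhat (n + 1)) →
      ∀ n : ℕ, ψhat (n + 1) ≠ 0 ∧
        (1 / 2 : ℝ) * ⟪ψ (n + 1), ψ (n + 1)⟫ ≤ (1 / 2 : ℝ) * ⟪ψ n, ψ n⟫ := by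
  have hGpos : G.IsPositive := (G.isPositive_iff).2
    ⟨fun x y => by simp only [ContinuousLinearMap.coe_coe]; rw [hG, hb, ← hG, real_inner_comm],
      fun x => by
        rcases eq_or_ne x 0 with rfl | hx
        · simp
        · exact (hG x x).symm ▸ (hpos x hx).le⟩
  simp only [← hG] at hψ0 ⊢
  refine ⟨2, two_pos, fun τ hτ ψ ψhat h0 hhat hnorm => ?_⟩
  have hstep n (hn : ⟪G (ψ n), ψ n⟫ = 1) : 1 ≤ ⟪G (ψhat (n + 1)), ψhat (n + 1)⟫ :=
    hhat n ▸ hGpos.one_le_inner_map_gradientFlowStep hn (τ n)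
  have hunit n : ⟪G (ψ n), ψ n⟫ = 1 := by
    induction n with
    | zero => rwa [h0]
    | succ n ih => exact hnorm n ▸ inner_map_normalizeBy_self (one_pos.trans_le (hstep n ih))
  refine fun n => ⟨fun h => absurd (hstep n (hunit n)) (by simp [h]), ?_⟩
  have hdecay : ⟪ψ (n + 1), ψ (n + 1)⟫ ≤ ⟪ψ n, ψ n⟫ := calc
    ⟪ψ (n + 1), ψ (n + 1)⟫ ≤ ⟪ψhat (n + 1), ψhat (n + 1)⟫ :=
      hnorm n ▸ inner_normalizeBy_self_le (hstep n (hunit n))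
    _ ≤ ⟪ψ n, ψ n⟫ := hhat n ▸ hGpos.isSymmetric.inner_gradientFlowStep_self_le (hunit n)
      (hτ n).1.le (hτ n).2
  linarith

/-- Energy dissipation of the (normalized) gradient flow iteration: there is a
maximal step size `τ_max > 0` such that for all step sizes `0 < τⁿ ≤ τ_max` the
iteration `ψ̂ⁿ⁺¹ = (1-τⁿ)•ψⁿ + (τⁿγⁿ)•Gψⁿ`, `ψⁿ⁺¹ = ψ̂ⁿ⁺¹/√(b ψ̂ⁿ⁺¹ ψ̂ⁿ⁺¹)` is
well defined and the energy `𝖤(u) = ½⟪u,u⟫` is nonincreasing. -/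
theorem gradient_flow_energy_dissipation
    {H : Type*} [NormedAddCommGroup H] [InnerProductSpace ℝ H] [CompleteSpace H]
    (b : H →L[ℝ] H →L[ℝ] ℝ) (hb : ∀ x y : H, b x y = b y x)
    (G : H →L[ℝ] H) (hG : ∀ ψ φ : H, ⟪G ψ, φ⟫ = b ψ φ)
    (hcpt : IsCompactOperator (⇑G)) (hinj : Function.Injective (⇑G))
    (hpos : ∀ φ : H, φ ≠ 0 → 0 < b φ φ)
    (ψ0 : H) (hψ0 : b ψ0 ψ0 = 1) :
    ∃ τmax > (0 : ℝ), ∀ τ : ℕ → ℝ, (∀ n, 0 < τ n ∧ τ n ≤ τmax) →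
      ∀ ψ ψhat : ℕ → H, ψ 0 = ψ0 →
      (∀ n : ℕ, ψhat (n + 1)
          = (1 - τ n) • ψ n + (τ n * (1 / b (G (ψ n)) (ψ n))) • G (ψ n)) →
      (∀ n : ℕ, ψ (n + 1)
          = (Real.sqrt (b (ψhat (n + 1)) (ψhat (n + 1))))⁻¹ • ψhat (n + 1)) →
      ∀ n : ℕ, ψhat (n + 1) ≠ 0 ∧
        (1 / 2 : ℝ) * ⟪ψ (n + 1), ψ (n + 1)⟫ ≤ (1 / 2 : ℝ) * ⟪ψ n, ψ n⟫ :=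
  gradient_flow_energy_dissipation_general b hb G hG hpos ψ0 hψ0
end
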